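/- arXiv:2010.03950 — 3 statements merged into one kernel-verified Lean document; each statement's English description precedes it below -/
import Mathlib

section
/- Let T = (S, A, p, γ, P, L, U, u₀, F, δ_u, δ_r) be an MDPRM and M_T its cross-product MDP. For any finite trajectory s₀, a₀, s₁, a₁, …, a_{n-1}, s_n in the environment, define the reward-machine state sequence by u₀ (initial) and u_{t+1} = δ_u(u_t, L(s_t, a_t, s_{t+1})) if u_t ∈ U and u_{t+1} = u_t if u_t ∈ F. Then: (i) the probability of the lifted trajectory in M_T equals the probability of the environment trajectory, i.e., ∏_{t=0}^{n-1} p'(⟨s_{t+1}, u_{t+1}⟩ | ⟨s_t, u_t⟩, a_t) = ∏_{t=0}^{n-1} p(s_{t+1} | s_t, a_t); and (ii) the cumulative discounted reward delivered by the reward machine along the trajectory, Σ_{t : u_t ∈ U} γ^t δ_r(u_t)(s_t, a_t, s_{t+1}), equals the cumulative discounted reward of the lifted trajectory in M_T, Σ_{t=0}^{n-1} γ^t r'(⟨s_t, u_t⟩, a_t, ⟨s_{t+1}, u_{t+1}⟩). -/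
open Finset

/-- The reward-machine state sequence along an environment trajectory
`s₀, a₀, s₁, a₁, …`: it starts at `Sum.inl u₀`, follows `δu` on labels while
non-terminal, and stays put once a terminal machine state (in `F`) is reached. -/
def rmStateSeq {S A P U F : Type*}
    (L : S × A × S → Finset P) (δu : U → Finset P → U ⊕ F) (u₀ : U)
    (s : ℕ → S) (a : ℕ → A) : ℕ → U ⊕ F
  | 0 => Sum.inl u₀
  | t + 1 =>
    match rmStateSeq L δu u₀ s a t with
    | Sum.inl u => δu u (L (s t, a t, s (t + 1)))
    | Sum.inr f => Sum.inr f

/-- Transition probabilities `p'` of the cross-product MDP `M_T`. -/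
def crossP {S A P U F : Type*} [DecidableEq U] [DecidableEq F]
    (L : S × A × S → Finset P) (δu : U → Finset P → U ⊕ F)
    (p : S → A → S → ℝ) :
    S × (U ⊕ F) → A → S × (U ⊕ F) → ℝ :=
  fun x a y =>
    match x.2 with
    | Sum.inl u => if y.2 = δu u (L (x.1, a, y.1)) then p x.1 a y.1 else 0
    | Sum.inr f => if y.2 = Sum.inr f then p x.1 a y.1 else 0

/-- Reward function `r'` of the cross-product MDP `M_T`. -/
def crossR {S A U F : Type*}
    (δr : U → S × A × S → ℝ) :
    S × (U ⊕ F) → A → S × (U ⊕ F) → ℝ :=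
  fun x a y =>
    match x.2 with
    | Sum.inl u => δr u (x.1, a, y.1)
    | Sum.inr _ => 0

/-- **Observation 1 (trajectory-level form).** For an MDPRM
`T = (S, A, p, γ, P, L, U, u₀, F, δu, δr)` and its cross-product MDP `M_T`,
along any finite environment trajectory `s₀, a₀, s₁, …, a_{n-1}, s_n`, lifting
via the reward-machine state sequence: (i) the probability of the lifted
trajectory in `M_T` equals the probability of the environment trajectory, and
(ii) the cumulative discounted reward delivered by the reward machine equals the
cumulative discounted reward of the lifted trajectory in `M_T`. -/
theorem crossProduct_trajectory_equivalence
    {S A P U F : Type*} [Fintype S] [Fintype A] [Fintype P] [Fintype U] [Fintype F]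
    [Nonempty S] [Nonempty A] [DecidableEq U] [DecidableEq F]
    (p : S → A → S → ℝ)
    (hp0 : ∀ s a s', 0 ≤ p s a s')
    (hp1 : ∀ s a, ∑ s', p s a s' = 1)
    (γ : ℝ) (hγ : 0 < γ) (hγ1 : γ ≤ 1)
    (L : S × A × S → Finset P)
    (δu : U → Finset P → U ⊕ F) (u₀ : U)
    (δr : U → S × A × S → ℝ)
    (n : ℕ) (s : ℕ → S) (a : ℕ → A) :
    (∏ t ∈ range n,
        crossP L δu p (s t, rmStateSeq L δu u₀ s a t) (a t)
          (s (t + 1), rmStateSeq L δu u₀ s a (t + 1)))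
      = ∏ t ∈ range n, p (s t) (a t) (s (t + 1)) ∧
    (∑ t ∈ range n,
        match rmStateSeq L δu u₀ s a t with
        | Sum.inl u => γ ^ t * δr u (s t, a t, s (t + 1))
        | Sum.inr _ => 0)
      = ∑ t ∈ range n,
          γ ^ t *
            crossR δr (s t, rmStateSeq L δu u₀ s a t) (a t)
              (s (t + 1), rmStateSeq L δu u₀ s a (t + 1)) := by
  constructor
  · apply Finset.prod_congr rfl
    intro t _
    rcases h : rmStateSeq L δu u₀ s a t with u | f
    · simp [crossP, rmStateSeq, h]
    · simp [crossP, rmStateSeq, h]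
  · apply Finset.sum_congr rfl
    intro t _
    rcases h : rmStateSeq L δu u₀ s a t with u | f
    · simp [crossR, h]
    · simp [crossR, h]
end

section
/- Let Σ be a finite alphabet and R : Σ* → ℝ a history-dependent reward function such that R has finite range and, for every c in its range, the level set {w ∈ Σ* : R(w) = c} is a regular language over Σ. Then R is realized by a finite-state machine: there exist a finite set of states U, an initial state u₀ ∈ U, a transition function δ : U × Σ → U, and an output function o : U × Σ → ℝ such that for every word w ∈ Σ* and every symbol σ ∈ Σ, o(δ*(u₀, w), σ) = R(w·σ), where δ* denotes the iterated application of δ along a word. In particular, a non-Markovian reward function on histories can be expressed by a reward machine whenever it distinguishes histories only through membership in a finite set of regular languages. -/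
open Classical in
/-- **Property 2 (expressiveness of reward machines).** Let `Σ` (here `α`) be a finite
alphabet and `R : Σ* → ℝ` a history-dependent reward function with finite range such
that every level set `{w : R w = c}` for `c` in its range is a regular language over
`Σ`. Then `R` is realized by a finite-state machine: there exist a finite set of
states `U`, an initial state `u₀ ∈ U`, a transition function `δ : U × Σ → U`, and an
output function `o : U × Σ → ℝ` such that for every word `w ∈ Σ*` and symbol `σ ∈ Σ`,
`o (δ*(u₀, w), σ) = R (w·σ)`, where `δ*` is the iterated application of `δ` along a
word (here `List.foldl δ u₀ w`). -/
theorem regular_level_sets_expressible_by_finite_state_machine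
    {α : Type*} [Fintype α]
    (R : List α → ℝ)
    (hfin : (Set.range R).Finite)
    (hreg : ∀ c ∈ Set.range R, Language.IsRegular {w : List α | R w = c}) :
    ∃ (U : Type) (_ : Fintype U) (u₀ : U) (δ : U → α → U) (o : U → α → ℝ),
      ∀ (w : List α) (σ : α), o (w.foldl δ u₀) σ = R (w ++ [σ]) := by
  classical
  set S := hfin.toFinset with hS
  have hreg' : ∀ c : S, Language.IsRegular {w : List α | R w = (c : ℝ)} := by
    rintro ⟨c, hc⟩
    exact hreg c (hfin.mem_toFinset.mp hc)
  choose St inst M hM using hreg'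
  refine ⟨∀ c : S, St c, by infer_instance, fun c => (M c).start,
    fun u σ c => (M c).step (u c) σ,
    fun u σ => if h : ∃ c : S, (M c).step (u c) σ ∈ (M c).accept then (h.choose : ℝ) else 0,
    ?_⟩
  intro w σ
  have key : ∀ (u : ∀ c : S, St c), w.foldl (fun u σ c => (M c).step (u c) σ) u
      = fun c => (M c).evalFrom (u c) w := by
    induction w with
    | nil => intro u; rfl
    | cons a t ih =>
      intro u
      simp only [List.foldl_cons, ih]
      rfl
  rw [key]
  have hc₀ : R (w ++ [σ]) ∈ S := hfin.mem_toFinset.mpr ⟨w ++ [σ], rfl⟩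
  set c₀ : S := ⟨R (w ++ [σ]), hc₀⟩ with hc₀def
  have hmem : ∀ c : S, ((M c).step ((M c).evalFrom (M c).start w) σ ∈ (M c).accept) ↔
      R (w ++ [σ]) = (c : ℝ) := by
    intro c
    rw [← DFA.evalFrom_append_singleton]
    have : (w ++ [σ]) ∈ (M c).accepts ↔ R (w ++ [σ]) = (c : ℝ) := by
      rw [hM c]; rfl
    exact this
  have hex : ∃ c : S, (M c).step (((fun c => (M c).evalFrom (M c).start w)) c) σ ∈ (M c).accept :=
    ⟨c₀, (hmem c₀).mpr rfl⟩
  beta_reduce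
  rw [dif_pos hex]
  have := (hmem hex.choose).mp hex.choose_spec
  exact this.symm
end

section
/- Let S, A be finite sets, P a finite set of propositional symbols, L : S × A × S → 2^P a labelling function, (U, u₀, F, δ_u, δ_r) a reward machine, γ ∈ (0,1] a discount factor, and α ∈ (0,1] a learning rate. Fix a notion of terminal environment states Term ⊆ S. Let Q : S × U × A → ℝ be a CRM q-table and, for each u ∈ U, let Q_u : S × A → ℝ be QRM q-tables, and suppose initially Q(s,u,a) = Q_u(s,a) for all s, u, a. For an experience (s, a, s'), let ℓ = L(s,a,s'), and for every ū ∈ U let ū' = δ_u(ū, ℓ) and r̄ = δ_r(ū)(s,a,s'). The CRM update simultaneously (using the pre-update table) sets Q(s, ū, a) to (1−α)Q(s,ū,a) + α·r̄ if s' ∈ Term or ū' ∈ F, and to (1−α)Q(s,ū,a) + α(r̄ + γ max_{a'∈A} Q(s', ū', a')) otherwise, for every ū ∈ U. The QRM update simultaneously (using the pre-update tables) sets Q_ū(s,a) to (1−α)Q_ū(s,a) + α·r̄ if s' ∈ Term or ū' ∈ F, and to (1−α)Q_ū(s,a) + α(r̄ + γ max_{a'∈A} Q_{ū'}(s', a'))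 otherwise, for every ū ∈ U. Then after the updates, Q(s,u,a) = Q_u(s,a) still holds for all s ∈ S, u ∈ U, a ∈ A; hence, by induction, after processing any finite sequence of experiences from equal initializations, the CRM and QRM q-tables coincide. -/
open Finset

/-- The tabular CRM q-learning update on a q-table `Q : S × U × A → ℝ` for a single
environment experience `e = (s, a, s')`: simultaneously, for every reward-machine
state `ū ∈ U` (using the pre-update table), the entry `Q(s, ū, a)` is moved with
learning rate `α` towards `r̄` if `s'` is a terminal environment state or
`ū' = δu(ū, L(s,a,s'))` is a terminal machine state, and towards
`r̄ + γ max_{a'} Q(s', ū', a')` otherwise, where `r̄ = δr(ū)(s,a,s')`.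
All other entries are unchanged. -/
noncomputable def crmUpdate {S A P U F : Type*}
    [Fintype A] [Nonempty A] [DecidableEq S] [DecidableEq A]
    (L : S × A × S → Finset P) (δu : U → Finset P → U ⊕ F)
    (δr : U → S × A × S → ℝ) (Term : Finset S) (γ α : ℝ)
    (Q : S → U → A → ℝ) (e : S × A × S) : S → U → A → ℝ :=
  fun s₁ u₁ a₁ =>
    if s₁ = e.1 ∧ a₁ = e.2.1 then
      match δu u₁ (L e) with
      | Sum.inr _ => (1 - α) * Q e.1 u₁ e.2.1 + α * δr u₁ e
      | Sum.inl v =>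
        if e.2.2 ∈ Term then (1 - α) * Q e.1 u₁ e.2.1 + α * δr u₁ e
        else (1 - α) * Q e.1 u₁ e.2.1
          + α * (δr u₁ e + γ * univ.sup' univ_nonempty (fun a' => Q e.2.2 v a'))
    else Q s₁ u₁ a₁

/-- The tabular QRM update on a family of q-tables `Q : U → S × A → ℝ` (one per
reward-machine state) for a single environment experience `e = (s, a, s')`:
simultaneously, for every `ū ∈ U` (using the pre-update tables), the entry
`Q_ū(s, a)` is moved with learning rate `α` towards `r̄` if `s'` is a terminal
environment state or `ū' = δu(ū, L(s,a,s'))` is a terminal machine state, and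
towards `r̄ + γ max_{a'} Q_{ū'}(s', a')` otherwise, where `r̄ = δr(ū)(s,a,s')`.
All other entries are unchanged. -/
noncomputable def qrmUpdate {S A P U F : Type*}
    [Fintype A] [Nonempty A] [DecidableEq S] [DecidableEq A]
    (L : S × A × S → Finset P) (δu : U → Finset P → U ⊕ F)
    (δr : U → S × A × S → ℝ) (Term : Finset S) (γ α : ℝ)
    (Q : U → S → A → ℝ) (e : S × A × S) : U → S → A → ℝ :=
  fun u₁ s₁ a₁ =>
    if s₁ = e.1 ∧ a₁ = e.2.1 then
      match δu u₁ (L e) with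
      | Sum.inr _ => (1 - α) * Q u₁ e.1 e.2.1 + α * δr u₁ e
      | Sum.inl v =>
        if e.2.2 ∈ Term then (1 - α) * Q u₁ e.1 e.2.1 + α * δr u₁ e
        else (1 - α) * Q u₁ e.1 e.2.1
          + α * (δr u₁ e + γ * univ.sup' univ_nonempty (fun a' => Q v e.2.2 a'))
    else Q u₁ s₁ a₁

theorem crm_qrm_step {S A P U F : Type*}
    [Fintype A] [Nonempty A] [DecidableEq S] [DecidableEq A]
    (L : S × A × S → Finset P) (δu : U → Finset P → U ⊕ F)
    (δr : U → S × A × S → ℝ) (Term : Finset S) (γ α : ℝ)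
    (Qc : S → U → A → ℝ) (Qq : U → S → A → ℝ)
    (h : ∀ s u a, Qc s u a = Qq u s a) (e : S × A × S) :
    ∀ s u a, crmUpdate L δu δr Term γ α Qc e s u a
      = qrmUpdate L δu δr Term γ α Qq e u s a := by
  intro s u a
  unfold crmUpdate qrmUpdate
  simp only [h]

/-- **Tabular CRM and QRM coincide.** If the CRM q-table `Qc` and the QRM q-tables
`Qq` agree initially, then they agree after the (simultaneous) update on any single
experience, and hence, by induction, after processing any finite sequence of
experiences. -/
theorem crm_eq_qrm_tabular
    {S A P U F : Type*}
    [Fintype S] [Fintype A] [Fintype P] [Fintype U] [Fintype F]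
    [Nonempty A] [DecidableEq S] [DecidableEq A]
    (L : S × A × S → Finset P) (δu : U → Finset P → U ⊕ F)
    (δr : U → S × A × S → ℝ) (Term : Finset S)
    (γ : ℝ) (hγ0 : 0 < γ) (hγ1 : γ ≤ 1)
    (α : ℝ) (hα0 : 0 < α) (hα1 : α ≤ 1)
    (Qc : S → U → A → ℝ) (Qq : U → S → A → ℝ)
    (h : ∀ s u a, Qc s u a = Qq u s a) :
    (∀ (e : S × A × S) (s : S) (u : U) (a : A),
      crmUpdate L δu δr Term γ α Qc e s u a
        = qrmUpdate L δu δr Term γ α Qq e u s a) ∧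
    (∀ (es : List (S × A × S)) (s : S) (u : U) (a : A),
      (es.foldl (crmUpdate L δu δr Term γ α) Qc) s u a
        = (es.foldl (qrmUpdate L δu δr Term γ α) Qq) u s a) := by
  constructor
  · exact fun e => crm_qrm_step L δu δr Term γ α Qc Qq h e
  · intro es
    induction es generalizing Qc Qq with
    | nil => exact h
    | cons e es ih =>
      exact ih _ _ (crm_qrm_step L δu δr Term γ α Qc Qq h e)
end
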